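/- Let x₁,x₂,x₃ be a triangle in a d-regular graph with uniform measure μ and rates 1/d. Set ρᵢ = ρ(xᵢ) > 0, gᵢ = ψ(x_{i+1}) − ψ(xᵢ) (cyclic mod 3). Then B^off_△(ρ,ψ) := (μ/d²) Σ_{i=1}^3 [ (1/2)gᵢ²(∂₁θ(ρᵢ,ρ_{i+1})(ρ_{i−1}−ρᵢ) + ∂₂θ(ρᵢ,ρ_{i+1})(ρ_{i+2}−ρ_{i+1})) − gᵢ(g_{i+1}+g_{i−1})θ(ρᵢ,ρ_{i+1}) ] ≥ (1/(2d)) · (μ/d) Σ_{i=1}^3 gᵢ² θ(ρᵢ,ρ_{i+1}) = (1/(2d)) A_△(ρ,ψ). -/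

import Mathlib

/-!
Put `θᵢ = θ(ρᵢ, ρᵢ₊₁)` and note `i + 2 = i - 1` in `ZMod 3`. Since the increments `gᵢ` sum to zero
around the triangle, the cross term `-gᵢ (gᵢ₊₁ + gᵢ₋₁) θᵢ` equals `gᵢ² θᵢ`, so each summand is at
least `gᵢ² θᵢ / 2` as soon as `θ(s,t) + ∂₁θ(s,t) (r - s) + ∂₂θ(s,t) (r - t) ≥ 0` with `r = ρᵢ₋₁`.
By Euler's identity `s ∂₁θ + t ∂₂θ = θ` the left side is `r (∂₁θ + ∂₂θ)`, which is nonnegative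
because differentiating `θ(s,t) = ∫₀¹ s^(1-p) t^p dp` under the integral sign exhibits both partial
derivatives as integrals of nonnegative functions.
-/

/-- The logarithmic mean `θ(s,t) = ∫₀¹ s^(1-p) t^p dp`. -/
noncomputable def logMean (s t : ℝ) : ℝ := ∫ p in (0:ℝ)..1, s ^ (1 - p) * t ^ p

/-- Partial derivative of the logarithmic mean in the first argument. -/
noncomputable def logMean₁ (s t : ℝ) : ℝ := deriv (fun u => logMean u t) s

/-- Partial derivative of the logarithmic mean in the second argument. -/
noncomputable def logMean₂ (s t : ℝ) : ℝ := deriv (fun v => logMean s v) t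

open Set Function Topology

theorem intervalIntegral.hasDerivAt_integral_of_continuousOn {F F' : ℝ → ℝ → ℝ}
    {x₀ a b : ℝ} {K : Set ℝ} (hK : K ∈ 𝓝 x₀) (hKc : IsCompact K)
    (hF : ∀ x ∈ K, ContinuousOn (F x) (uIcc a b))
    (hF' : ContinuousOn (uncurry F') (K ×ˢ uIcc a b))
    (h_diff : ∀ x ∈ K, ∀ p ∈ uIcc a b, HasDerivAt (F · p) (F' x p) x) :
    HasDerivAt (fun x => ∫ p in a..b, F x p) (∫ p in a..b, F' x₀ p) x₀ := by
  obtain ⟨C, hC⟩ := (hKc.prod isCompact_uIcc).exists_bound_of_continuousOn hF'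
  have hx₀ : x₀ ∈ K := mem_of_mem_nhds hK
  have hF'x₀ : ContinuousOn (F' x₀) (uIcc a b) :=
    hF'.comp (continuousOn_const.prodMk continuousOn_id) fun p hp => ⟨hx₀, hp⟩
  refine (intervalIntegral.hasDerivAt_integral_of_dominated_loc_of_deriv_le (bound := fun _ => C)
    hK ?_ (hF x₀ hx₀).intervalIntegrable ?_ ?_ intervalIntegrable_const ?_).2
  · filter_upwards [hK] with x hx
    exact (hF x hx).mono uIoc_subset_uIcc |>.aestronglyMeasurable measurableSet_uIoc
  · exact (hF'x₀.mono uIoc_subset_uIcc).aestronglyMeasurable measurableSet_uIoc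
  · exact Filter.Eventually.of_forall fun p hp x hx => hC (x, p) ⟨hx, uIoc_subset_uIcc hp⟩
  · exact Filter.Eventually.of_forall fun p hp x hx => h_diff x hx p (uIoc_subset_uIcc hp)

section

variable {s t : ℝ}

lemma continuous_rpow_one_sub_mul_rpow (hs : 0 < s) (ht : 0 < t) :
    Continuous fun p : ℝ => s ^ (1 - p) * t ^ p := by
  fun_prop (disch := positivity)

lemma hasDerivAt_rpow_one_sub_mul_rpow (hs : 0 < s) (t p : ℝ) :
    HasDerivAt (fun u => u ^ (1 - p) * t ^ p) ((1 - p) * s ^ (-p) * t ^ p) s := by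
  simpa using (Real.hasDerivAt_rpow_const (p := 1 - p) (Or.inl hs.ne')).mul_const (t ^ p)

end

theorem logMean_comm (s t : ℝ) : logMean s t = logMean t s := by
  simpa [logMean, mul_comm] using intervalIntegral.integral_comp_sub_left
    (fun p => t ^ (1 - p) * s ^ p) (1 : ℝ) (a := 0) (b := 1)

theorem hasDerivAt_logMean_left {s t : ℝ} (hs : 0 < s) (ht : 0 < t) :
    HasDerivAt (logMean · t) (∫ p in (0:ℝ)..1, (1 - p) * s ^ (-p) * t ^ p) s := by
  have hK : Icc (s / 2) (2 * s) ∈ 𝓝 s := Icc_mem_nhds (by linarith) (by linarith)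
  have hpos : ∀ x ∈ Icc (s / 2) (2 * s), 0 < x := fun x hx => by linarith [hx.1]
  refine intervalIntegral.hasDerivAt_integral_of_continuousOn hK isCompact_Icc
    (fun x hx => (continuous_rpow_one_sub_mul_rpow (hpos x hx) ht).continuousOn) ?_
    (fun x hx p _ => hasDerivAt_rpow_one_sub_mul_rpow (hpos x hx) t p)
  refine ((continuousOn_const.sub continuousOn_snd).mul ?_).mul ?_
  · exact continuousOn_fst.rpow continuousOn_snd.neg fun z hz => Or.inl (hpos _ hz.1).ne'
  · exact (continuous_const.rpow continuous_snd fun _ => Or.inl ht.ne').continuousOn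

theorem logMean₁_eq_integral {s t : ℝ} (hs : 0 < s) (ht : 0 < t) :
    logMean₁ s t = ∫ p in (0:ℝ)..1, (1 - p) * s ^ (-p) * t ^ p :=
  (hasDerivAt_logMean_left hs ht).deriv

theorem logMean₂_eq_logMean₁ (s t : ℝ) : logMean₂ s t = logMean₁ t s := by
  simp only [logMean₂, logMean₁, logMean_comm s]

theorem mul_logMean₁_eq_integral {s t : ℝ} (hs : 0 < s) (ht : 0 < t) :
    s * logMean₁ s t = ∫ p in (0:ℝ)..1, (1 - p) * (s ^ (1 - p) * t ^ p) := by
  rw [logMean₁_eq_integral hs ht, ← intervalIntegral.integral_const_mul]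
  congr 1 with p
  rw [sub_eq_add_neg, Real.rpow_add hs, Real.rpow_one]
  ring

theorem logMean₁_nonneg {s t : ℝ} (hs : 0 < s) (ht : 0 < t) : 0 ≤ logMean₁ s t := by
  rw [logMean₁_eq_integral hs ht]
  refine intervalIntegral.integral_nonneg zero_le_one fun p hp => ?_
  have : 0 ≤ 1 - p := by linarith [hp.2]
  positivity

theorem logMean₂_nonneg {s t : ℝ} (hs : 0 < s) (ht : 0 < t) : 0 ≤ logMean₂ s t :=
  logMean₂_eq_logMean₁ s t ▸ logMean₁_nonneg ht hs

theorem mul_logMean₁_add_mul_logMean₂ {s t : ℝ} (hs : 0 < s) (ht : 0 < t) :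
    s * logMean₁ s t + t * logMean₂ s t = logMean s t := by
  have h₂ : t * logMean₂ s t = ∫ p in (0:ℝ)..1, p * (s ^ (1 - p) * t ^ p) := by
    rw [logMean₂_eq_logMean₁, mul_logMean₁_eq_integral ht hs]
    simpa [mul_comm] using intervalIntegral.integral_comp_sub_left
      (fun p => p * (s ^ (1 - p) * t ^ p)) (1 : ℝ) (a := 0) (b := 1)
  have hleft : Continuous fun p : ℝ => (1 - p) * (s ^ (1 - p) * t ^ p) := by
    fun_prop (disch := positivity)
  have hright : Continuous fun p : ℝ => p * (s ^ (1 - p) * t ^ p) := by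
    fun_prop (disch := positivity)
  rw [mul_logMean₁_eq_integral hs ht, h₂, ← intervalIntegral.integral_add
    (hleft.intervalIntegrable 0 1) (hright.intervalIntegrable 0 1)]
  simp only [logMean, ← add_mul, sub_add_cancel, one_mul]

theorem logMean_linearization_nonneg {s t r : ℝ} (hs : 0 < s) (ht : 0 < t) (hr : 0 ≤ r) :
    0 ≤ logMean s t + logMean₁ s t * (r - s) + logMean₂ s t * (r - t) := by
  linear_combination mul_logMean₁_add_mul_logMean₂ hs ht
    + mul_nonneg hr (add_nonneg (logMean₁_nonneg hs ht) (logMean₂_nonneg hs ht))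

theorem triangle_offdiag_bound_general (μ d : ℝ) (hμ : 0 < μ)
    (ρ : ZMod 3 → ℝ) (hρ : ∀ i, 0 < ρ i) (ψ : ZMod 3 → ℝ) :
    (μ / d^2) * ∑ i : ZMod 3,
        ((1/2) * (ψ (i+1) - ψ i)^2 *
            (logMean₁ (ρ i) (ρ (i+1)) * (ρ (i-1) - ρ i)
              + logMean₂ (ρ i) (ρ (i+1)) * (ρ (i+2) - ρ (i+1)))
          - (ψ (i+1) - ψ i) * ((ψ (i+2) - ψ (i+1)) + (ψ i - ψ (i-1)))
              * logMean (ρ i) (ρ (i+1)))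
      ≥ (1 / (2*d)) * ((μ / d) * ∑ i : ZMod 3, (ψ (i+1) - ψ i)^2 * logMean (ρ i) (ρ (i+1))) := by
  calc (1 / (2*d)) * ((μ / d) * ∑ i : ZMod 3, (ψ (i+1) - ψ i)^2 * logMean (ρ i) (ρ (i+1)))
      = (μ / d^2) * ∑ i : ZMod 3, (1/2) * ((ψ (i+1) - ψ i)^2 * logMean (ρ i) (ρ (i+1))) := by
        rw [← Finset.mul_sum]; ring
    _ ≤ _ := by
      gcongr with i
      have hcyc : i + 2 = i - 1 := by
        rw [sub_eq_add_neg, show (-1 : ZMod 3) = 2 from rfl]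
      rw [hcyc]
      linear_combination (1/2 : ℝ) * mul_nonneg (sq_nonneg (ψ (i+1) - ψ i))
        (logMean_linearization_nonneg (hρ i) (hρ (i+1)) (hρ (i-1)).le)

/-- Off-diagonal bound for a triangle `x₁,x₂,x₃` (vertices indexed cyclically by
`ZMod 3`) in a `d`-regular graph with uniform measure `μ`:
`B^off_△(ρ,ψ) ≥ (1/(2d)) A_△(ρ,ψ)`, where `gᵢ = ψ(x_{i+1}) - ψ(xᵢ)`. -/
theorem triangle_offdiag_bound (μ d : ℝ) (hμ : 0 < μ) (hd : 0 < d)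
    (ρ : ZMod 3 → ℝ) (hρ : ∀ i, 0 < ρ i) (ψ : ZMod 3 → ℝ) :
    (μ / d^2) * ∑ i : ZMod 3,
        ((1/2) * (ψ (i+1) - ψ i)^2 *
            (logMean₁ (ρ i) (ρ (i+1)) * (ρ (i-1) - ρ i)
              + logMean₂ (ρ i) (ρ (i+1)) * (ρ (i+2) - ρ (i+1)))
          - (ψ (i+1) - ψ i) * ((ψ (i+2) - ψ (i+1)) + (ψ i - ψ (i-1)))
              * logMean (ρ i) (ρ (i+1)))
      ≥ (1 / (2*d)) * ((μ / d) * ∑ i : ZMod 3, (ψ (i+1) - ψ i)^2 * logMean (ρ i) (ρ (i+1))) :=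
  triangle_offdiag_bound_general μ d hμ ρ hρ ψ
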